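/- arXiv:1902.02481 — 3 statements merged into one kernel-verified Lean document; each statement's English description precedes it below -/
import Mathlib

section
/- Let H = ℝ, D = [0,1), T₁(x) = x², and T₂ = P_C the projection onto C = [0,1/2]. Then Fix(T₁) ∩ Fix(T₂) = {0}, T₁ is not linearly regular on D (there is no κ ≥ 0 with d_{Fix(T₁)}(x) ≤ κ|x − T₁(x)| for all x ∈ D), but {T₁, T₂} is power regular with constant 2, i.e., d_{{0}}(x) ≤ 2(|x − T₁(x)| + |x − T₂(x)|) for all x ∈ D. -/
open Metric

/-- Example: on `D = [0,1)`, with `T₁ x = x²` and `T₂` the projection onto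
`C = [0,1/2]`, the common fixed point set is `{0}`, `T₁` is not linearly
regular, but `{T₁, T₂}` is power regular with constant `2`. -/
theorem stmt_3
    (T₁ T₂ : ℝ → ℝ) (hT₁ : ∀ x, T₁ x = x ^ 2)
    (hT₂ : ∀ x, T₂ x = max 0 (min x (1/2))) :
    ({x ∈ Set.Ico (0:ℝ) 1 | T₁ x = x} ∩ {x ∈ Set.Ico (0:ℝ) 1 | T₂ x = x}
        = {0})
    ∧ (¬ ∃ κ : ℝ, 0 ≤ κ ∧ ∀ x ∈ Set.Ico (0:ℝ) 1,
        infDist x {y ∈ Set.Ico (0:ℝ) 1 | T₁ y = y} ≤ κ * |x - T₁ x|)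
    ∧ (∀ x ∈ Set.Ico (0:ℝ) 1,
        infDist x ({0} : Set ℝ) ≤ 2 * (|x - T₁ x| + |x - T₂ x|)) := by
  have hset : {y ∈ Set.Ico (0:ℝ) 1 | T₁ y = y} = ({0} : Set ℝ) := by
    ext y
    simp only [Set.mem_setOf_eq, Set.mem_Ico, hT₁, Set.mem_singleton_iff]
    constructor
    · rintro ⟨⟨h0, h1⟩, he⟩
      nlinarith
    · rintro rfl
      norm_num
  refine ⟨?_, ?_, ?_⟩
  · rw [hset]
    ext y
    simp only [Set.mem_inter_iff, Set.mem_singleton_iff, Set.mem_setOf_eq, Set.mem_Ico]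
    constructor
    · rintro ⟨rfl, _⟩; rfl
    · rintro rfl
      refine ⟨rfl, ⟨le_refl 0, by norm_num⟩, ?_⟩
      rw [hT₂]; norm_num
  · rintro ⟨κ, hκ, h⟩
    set x : ℝ := 1 - 1 / (2 * (κ + 1)) with hx
    have hκ1 : (0:ℝ) < κ + 1 := by linarith
    have hfrac : 0 < 1 / (2 * (κ + 1)) := by positivity
    have hfrac2 : 1 / (2 * (κ + 1)) ≤ 1/2 := by
      rw [div_le_div_iff₀ (by positivity) (by norm_num)]
      linarith
    have hx0 : (0:ℝ) ≤ x := by rw [hx]; linarith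
    have hx1 : x < 1 := by rw [hx]; linarith
    have := h x ⟨hx0, hx1⟩
    rw [hset, infDist_singleton, hT₁] at this
    have hd : dist x 0 = x := by rw [Real.dist_eq, sub_zero, abs_of_nonneg hx0]
    rw [hd] at this
    have habs : |x - x ^ 2| = x * (1 - x) := by
      rw [abs_of_nonneg (by nlinarith)]; ring
    rw [habs] at this
    -- x ≤ κ * (x * (1 - x)), with 1 - x = 1/(2(κ+1))
    have h1x : 1 - x = 1 / (2 * (κ + 1)) := by rw [hx]; ring
    have hxhalf : (1:ℝ)/2 ≤ x := by rw [hx]; linarith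
    have hklt : κ * (1 - x) < 1 := by
      rw [h1x, mul_one_div, div_lt_one (by positivity)]
      linarith
    nlinarith [mul_lt_of_lt_one_right (lt_of_lt_of_le (by norm_num : (0:ℝ) < 1/2) hxhalf) hklt]
  · intro x hx
    obtain ⟨h0, h1⟩ := hx
    rw [infDist_singleton, Real.dist_eq, sub_zero, abs_of_nonneg h0, hT₁, hT₂]
    have habs : |x - x ^ 2| = x * (1 - x) := by
      rw [abs_of_nonneg (by nlinarith)]; ring
    rw [habs]
    rcases le_or_gt x (1/2) with hc | hc
    · have : max 0 (min x (1/2)) = x := by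
        rw [min_eq_left hc, max_eq_right h0]
      rw [this]
      simp only [sub_self, abs_zero, add_zero]
      nlinarith
    · have : max 0 (min x (1/2)) = 1/2 := by
        rw [min_eq_right hc.le, max_eq_right (by norm_num)]
      rw [this]
      rw [abs_of_nonneg (by linarith)]
      nlinarith
end

section
/- Let {d_k} be a sequence of nonnegative reals and γ ∈ (0,1), {e_k} nonnegative with e_k → 0, satisfying d_{k+1}² ≤ γ · sup_{⌊(k+1)/2⌋ ≤ l ≤ k} d_l² + e_k for all k ≥ 1. Then d_k → 0. -/
open Filter Topology

theorem stmt_16 (d e : ℕ → ℝ) (γ : ℝ) (hγ0 : 0 < γ) (hγ1 : γ < 1)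
    (hd : ∀ k, 0 ≤ d k) (he : ∀ k, 0 ≤ e k)
    (he0 : Tendsto e atTop (𝓝 0))
    (hrec : ∀ k, 1 ≤ k → ∀ S : ℝ,
      (∀ l, (k + 1) / 2 ≤ l → l ≤ k → d l ^ 2 ≤ S) →
      d (k + 1) ^ 2 ≤ γ * S + e k) :
    Tendsto d atTop (𝓝 0) := by
  have h1γ : 0 < 1 - γ := by linarith
  -- e is bounded
  obtain ⟨E, hE⟩ : ∃ E, ∀ k, e k ≤ E := by
    obtain ⟨E, hE⟩ := he0.bddAbove_range
    exact ⟨E, fun k => hE ⟨k, rfl⟩⟩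
  set B : ℝ := max (max (d 0 ^ 2) (d 1 ^ 2)) (E / (1 - γ)) with hBdef
  have hEB : E ≤ (1 - γ) * B := by
    have h1 : E / (1 - γ) ≤ B := le_max_right _ _
    have h2 : E = (1 - γ) * (E / (1 - γ)) := by field_simp
    nlinarith
  -- d² is bounded by B
  have hbd : ∀ k, d k ^ 2 ≤ B := by
    intro k
    induction k using Nat.strong_induction_on with
    | _ k ih =>
      match k, ih with
      | 0, _ => exact (le_max_left _ _).trans (le_max_left _ _)
      | 1, _ => exact (le_max_right _ _).trans (le_max_left _ _)
      | (j+2), ih =>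
        have hr := hrec (j+1) (by omega) B (fun l _ hl => ih l (by omega))
        have := hE (j+1)
        linarith
  set f : ℕ → ℝ := fun k => d k ^ 2 with hfdef
  have hbdd : IsBoundedUnder (· ≤ ·) atTop f := isBoundedUnder_of ⟨B, hbd⟩
  have hbdd' : IsBoundedUnder (· ≥ ·) atTop f :=
    isBoundedUnder_of ⟨0, fun k => sq_nonneg (d k)⟩
  have hcob : IsCoboundedUnder (· ≤ ·) atTop f := hbdd'.isCoboundedUnder_le
  have hcob' : IsCoboundedUnder (· ≥ ·) atTop f := hbdd.isCoboundedUnder_ge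
  set L := limsup f atTop with hLdef
  have key : ∀ c, L < c → L ≤ γ * c := by
    intro c hc
    have hev : ∀ᶠ k in atTop, f k < c := eventually_lt_of_limsup_lt hc hbdd
    obtain ⟨N, hN⟩ := eventually_atTop.mp hev
    apply le_of_forall_pos_le_add
    intro ε hε
    have heε : ∀ᶠ k in atTop, e k < ε := he0.eventually (gt_mem_nhds hε)
    obtain ⟨M, hM⟩ := eventually_atTop.mp heε
    apply limsup_le_of_le hcob
    rw [eventually_atTop]
    refine ⟨2 * N + M + 2, fun m hm => ?_⟩
    obtain ⟨k, rfl⟩ : ∃ k, m = k + 1 := ⟨m - 1, by omega⟩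
    have hk : 2 * N + M + 1 ≤ k := by omega
    have hr := hrec k (by omega) c (fun l hl1 _ => by
      have : N ≤ l := by omega
      exact (hN l this).le)
    have := hM k (by omega)
    show d (k + 1) ^ 2 ≤ γ * c + ε
    linarith
  have hLγ : L ≤ γ * L := by
    apply le_of_forall_pos_le_add
    intro ε hε
    have hγε : 0 < ε / γ := div_pos hε hγ0
    have h1 := key (L + ε / γ) (by linarith)
    have h2 : γ * (L + ε / γ) = γ * L + ε := by field_simp
    linarith
  have hL0 : L ≤ 0 := by nlinarith
  have hliminf : (0 : ℝ) ≤ liminf f atTop :=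
    le_liminf_of_le hcob' (Eventually.of_forall fun k => sq_nonneg (d k))
  have hf : Tendsto f atTop (𝓝 0) :=
    tendsto_of_le_liminf_of_limsup_le hliminf hL0 hbdd hbdd'
  have hsq : Tendsto (fun k => Real.sqrt (f k)) atTop (𝓝 (Real.sqrt 0)) :=
    (Real.continuous_sqrt.tendsto 0).comp hf
  have heq : (fun k => Real.sqrt (f k)) = d := funext fun k => Real.sqrt_sq (hd k)
  simpa [heq, Real.sqrt_zero] using hsq
end

section
/- Let {d_k} be a sequence of nonnegative reals and γ ∈ (0,1) satisfying d_{k+1}² ≤ γ · sup_{⌊(k+1)/2⌋ ≤ l ≤ k} d_l² for all k ≥ 1. Then d_{k+1}² ≤ γ^{⌊log₂(k+1)⌋} d₀²·C for some constant C depending only on d₀ and the initial terms; in particular d_k² = O(k^{−log₂(1/γ)}), i.e., d_k² ≤ C' (k+1)^{−log₂(1/γ)} for some constant C' and all k. -/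
open Filter Topology

/-! Unrolling the recursion along halving indices: every index in `[⌊k/2⌋, k - 1]` has binary
logarithm at least `Nat.log 2 k - 1`, so by strong induction `d_k² ≤ M γ^{⌊log₂ k⌋}`.
Since `k + 1 ≤ 2^{⌊log₂ k⌋ + 1}` and `γ^{log₂ x} = x^{log₂ γ}`, this is `O((k+1)^{log₂ γ})`. -/

theorem le_mul_pow_log_two_of_dyadic_contraction {a : ℕ → ℝ} {γ M : ℝ}
    (hγ0 : 0 ≤ γ) (hγ1 : γ ≤ 1) (hM : 0 ≤ M) (ha0 : a 0 ≤ M) (ha1 : a 1 ≤ M)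
    (hrec : ∀ k, 1 ≤ k → ∀ S : ℝ, (∀ l, (k + 1) / 2 ≤ l → l ≤ k → a l ≤ S) →
      a (k + 1) ≤ γ * S) (k : ℕ) :
    a k ≤ M * γ ^ Nat.log 2 k := by
  induction k using Nat.strong_induction_on with
  | _ k ih =>
    match k with
    | 0 => simpa using ha0
    | 1 => simpa using ha1
    | j + 2 =>
      have hlog_pos : 1 ≤ Nat.log 2 (j + 2) := Nat.log_pos one_lt_two (by omega)
      have hprev : ∀ l, (j + 2) / 2 ≤ l → l ≤ j + 1 →
          a l ≤ M * γ ^ (Nat.log 2 (j + 2) - 1) := fun l hl₁ hl₂ => by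
        have hlog : Nat.log 2 (j + 2) - 1 ≤ Nat.log 2 l :=
          Nat.log_div_base 2 (j + 2) ▸ Nat.log_mono_right hl₁
        exact (ih l (by omega)).trans
          (mul_le_mul_of_nonneg_left (pow_le_pow_of_le_one hγ0 hγ1 hlog) hM)
      calc a (j + 2) ≤ γ * (M * γ ^ (Nat.log 2 (j + 2) - 1)) := hrec (j + 1) (by omega) _ hprev
        _ = M * γ ^ (Nat.log 2 (j + 2) - 1 + 1) := by ring
        _ = M * γ ^ Nat.log 2 (j + 2) := by rw [Nat.sub_add_cancel hlog_pos]

theorem pow_log_two_succ_le_rpow_logb {γ : ℝ} (hγ0 : 0 < γ) (hγ1 : γ ≤ 1) (k : ℕ) :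
    γ ^ (Nat.log 2 k + 1) ≤ ((k : ℝ) + 1) ^ Real.logb 2 γ := by
  have hk : (k : ℝ) + 1 ≤ 2 ^ (Nat.log 2 k + 1) := by
    exact_mod_cast Nat.lt_pow_succ_log_self one_lt_two k
  calc γ ^ (Nat.log 2 k + 1) = ((2 : ℝ) ^ Real.logb 2 γ) ^ (Nat.log 2 k + 1) := by
        rw [Real.rpow_logb two_pos (by norm_num) hγ0]
    _ = ((2 : ℝ) ^ (Nat.log 2 k + 1)) ^ Real.logb 2 γ := Real.rpow_pow_comm zero_le_two _ _
    _ ≤ ((k : ℝ) + 1) ^ Real.logb 2 γ :=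
        Real.rpow_le_rpow_of_nonpos (by positivity) hk (Real.logb_nonpos one_lt_two hγ0.le hγ1)

theorem stmt_17_general (d : ℕ → ℝ) (γ : ℝ) (hγ0 : 0 < γ) (hγ1 : γ < 1)
    (hrec : ∀ k, 1 ≤ k → ∀ S : ℝ,
      (∀ l, (k + 1) / 2 ≤ l → l ≤ k → d l ^ 2 ≤ S) →
      d (k + 1) ^ 2 ≤ γ * S) :
    ∃ C' : ℝ, 0 ≤ C' ∧ ∀ k : ℕ,
      d k ^ 2 ≤ C' * ((k : ℝ) + 1) ^ (-(Real.logb 2 (1 / γ))) := by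
  set M := max (d 0 ^ 2) (d 1 ^ 2)
  have hM : 0 ≤ M := (sq_nonneg _).trans (le_max_left _ _)
  refine ⟨M / γ, by positivity, fun k => ?_⟩
  rw [one_div, Real.logb_inv, neg_neg]
  calc d k ^ 2 ≤ M * γ ^ Nat.log 2 k :=
        le_mul_pow_log_two_of_dyadic_contraction hγ0.le hγ1.le hM
          (le_max_left _ _) (le_max_right _ _) hrec k
    _ = M / γ * γ ^ (Nat.log 2 k + 1) := by field_simp; ring
    _ ≤ M / γ * ((k : ℝ) + 1) ^ Real.logb 2 γ := by
        gcongr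
        exact pow_log_two_succ_le_rpow_logb hγ0 hγ1.le k

theorem stmt_17 (d : ℕ → ℝ) (γ : ℝ) (hγ0 : 0 < γ) (hγ1 : γ < 1)
    (hd : ∀ k, 0 ≤ d k)
    (hrec : ∀ k, 1 ≤ k → ∀ S : ℝ,
      (∀ l, (k + 1) / 2 ≤ l → l ≤ k → d l ^ 2 ≤ S) →
      d (k + 1) ^ 2 ≤ γ * S) :
    ∃ C' : ℝ, 0 ≤ C' ∧ ∀ k : ℕ,
      d k ^ 2 ≤ C' * ((k : ℝ) + 1) ^ (-(Real.logb 2 (1 / γ))) :=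
  stmt_17_general d γ hγ0 hγ1 hrec
end
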